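/- Regret bound for strongly convex online gradient descent with decaying stepsize: let f_t : F → ℝ be σ-strongly convex differentiable functions on a closed convex F ⊆ ℝ^n with ‖∇f_t(x)‖ ≤ G for all x ∈ F and all t. Define x_{t+1} = Π_F(x_t − η_t ∇f_t(x_t)) with η_t = 1/(σ t), where Π_F is Euclidean projection onto F. Then ∑_{t=1}^T f_t(x_t) − min_{x∈F} ∑_{t=1}^T f_t(x) ≤ (G²/(2σ))(1 + log T). -/

import Mathlib

/-!
Write `a t = ‖x t - x⋆‖²`. The projection onto `F` does not increase distances to points of `F`,
so expanding the gradient step and using strong convexity gives the one-step bound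
`f t (x t) - f t x⋆ ≤ σ/2 (t (a t - a (t+1)) - a t) + G²/(2σ t)`.
With `η_t = 1/(σ t)` the distance terms telescope to `-σ T a (T+1)/2 ≤ 0`,
leaving `G²/(2σ)` times the harmonic number `H_T ≤ 1 + log T`.
-/

open RealInnerProductSpace

section Projection

variable {E : Type*} [NormedAddCommGroup E] [InnerProductSpace ℝ E]
  {K : Set E} {z p : E}

theorem inner_sub_le_zero_of_forall_norm_le (hK : Convex ℝ K) (hp : p ∈ K)
    (hnear : ∀ w ∈ K, ‖p - z‖ ≤ ‖w - z‖) : ∀ w ∈ K, ⟪z - p, w - p⟫ ≤ 0 := by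
  have : Nonempty K := ⟨⟨p, hp⟩⟩
  refine (norm_eq_iInf_iff_real_inner_le_zero hK hp).1 (le_antisymm ?_ ?_)
  · exact le_ciInf fun w => by
      rw [norm_sub_rev z p, norm_sub_rev z w]
      exact hnear w w.2
  · exact ciInf_le (f := fun w : K => ‖z - w‖)
      ⟨0, Set.forall_mem_range.2 fun _ => norm_nonneg _⟩ ⟨p, hp⟩

theorem norm_sub_sq_le_of_forall_norm_le (hK : Convex ℝ K) (hp : p ∈ K)
    (hnear : ∀ w ∈ K, ‖p - z‖ ≤ ‖w - z‖) {w : E} (hw : w ∈ K) :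
    ‖p - w‖ ^ 2 ≤ ‖z - w‖ ^ 2 := by
  have hobtuse : 0 ≤ ⟪z - p, p - w⟫ := by
    rw [← neg_sub w p, inner_neg_right]
    linarith [inner_sub_le_zero_of_forall_norm_le hK hp hnear w hw]
  calc ‖p - w‖ ^ 2 ≤ ‖z - p‖ ^ 2 + 2 * ⟪z - p, p - w⟫ + ‖p - w‖ ^ 2 := by
        nlinarith [sq_nonneg ‖z - p‖]
    _ = ‖z - w‖ ^ 2 := by rw [← norm_add_sq_real, sub_add_sub_cancel]

theorem norm_projected_step_sub_sq_le (hK : Convex ℝ K) {x g y : E} {μ : ℝ}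
    (hp : p ∈ K) (hnear : ∀ w ∈ K, ‖p - (x - μ⁻¹ • g)‖ ≤ ‖w - (x - μ⁻¹ • g)‖) (hy : y ∈ K) :
    ‖p - y‖ ^ 2 ≤ ‖x - y‖ ^ 2 - 2 * μ⁻¹ * ⟪g, x - y⟫ + μ⁻¹ ^ 2 * ‖g‖ ^ 2 := by
  have hexpand : ‖x - μ⁻¹ • g - y‖ ^ 2
      = ‖x - y‖ ^ 2 - 2 * μ⁻¹ * ⟪g, x - y⟫ + μ⁻¹ ^ 2 * ‖g‖ ^ 2 := by
    rw [sub_right_comm, norm_sub_sq_real, real_inner_smul_right, norm_smul, mul_pow,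
      Real.norm_eq_abs, sq_abs, real_inner_comm]
    ring
  exact hexpand ▸ norm_sub_sq_le_of_forall_norm_le hK hp hnear hy

theorem sub_le_of_strongly_convex_projected_step (hK : Convex ℝ K) {f : E → ℝ}
    {x g y : E} {σ μ G : ℝ} (hμ : 0 < μ)
    (hsc : f y - f x ≥ ⟪g, y - x⟫ + σ / 2 * ‖y - x‖ ^ 2) (hg : ‖g‖ ≤ G)
    (hp : p ∈ K) (hnear : ∀ w ∈ K, ‖p - (x - μ⁻¹ • g)‖ ≤ ‖w - (x - μ⁻¹ • g)‖) (hy : y ∈ K) :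
    f x - f y ≤ μ / 2 * (‖x - y‖ ^ 2 - ‖p - y‖ ^ 2) - σ / 2 * ‖x - y‖ ^ 2 + G ^ 2 / (2 * μ) := by
  have hstep := norm_projected_step_sub_sq_le hK hp hnear hy
  have hg2 : ‖g‖ ^ 2 ≤ G ^ 2 := pow_le_pow_left₀ (norm_nonneg g) hg 2
  rw [← neg_sub x y, inner_neg_right, norm_neg] at hsc
  have hscaled : μ / 2 * (‖x - y‖ ^ 2 - ‖p - y‖ ^ 2) ≥ ⟪g, x - y⟫ - ‖g‖ ^ 2 / (2 * μ) := by
    have hmul := mul_le_mul_of_nonneg_left hstep (by positivity : 0 ≤ μ / 2)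
    have hμ0 := hμ.ne'
    calc ⟪g, x - y⟫ - ‖g‖ ^ 2 / (2 * μ)
        = μ / 2 * (‖x - y‖ ^ 2 - (‖x - y‖ ^ 2 - 2 * μ⁻¹ * ⟪g, x - y⟫ + μ⁻¹ ^ 2 * ‖g‖ ^ 2)) := by
          field_simp; ring
      _ ≤ μ / 2 * (‖x - y‖ ^ 2 - ‖p - y‖ ^ 2) := by linarith
  have hbound : ‖g‖ ^ 2 / (2 * μ) ≤ G ^ 2 / (2 * μ) := by gcongr
  linarith

end Projection

theorem sum_Icc_mul_sub_sub_eq (a : ℕ → ℝ) (T : ℕ) :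
    ∑ t ∈ Finset.Icc 1 T, ((t : ℝ) * (a t - a (t + 1)) - a t) = -(T * a (T + 1)) := by
  induction T with
  | zero => simp
  | succ T ih =>
    rw [Finset.sum_Icc_succ_top (Nat.le_add_left 1 T), ih]
    push_cast
    ring

theorem sum_Icc_inv_le_one_add_log (T : ℕ) :
    ∑ t ∈ Finset.Icc 1 T, ((t : ℝ))⁻¹ ≤ 1 + Real.log T := by
  simpa [harmonic_eq_sum_Icc] using harmonic_le_one_add_log T

theorem ogd_strongly_convex_log_regret_general (n : ℕ) (σ G : ℝ) (hσ : 0 < σ)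
    (F : Set (EuclideanSpace ℝ (Fin n)))
    (hFconv : Convex ℝ F)
    (f : ℕ → EuclideanSpace ℝ (Fin n) → ℝ)
    (grad : ℕ → EuclideanSpace ℝ (Fin n) → EuclideanSpace ℝ (Fin n))
    (hsc : ∀ t : ℕ, ∀ x ∈ F, ∀ y ∈ F,
      f t x - f t y ≥ ⟪grad t y, x - y⟫ + σ / 2 * ‖x - y‖ ^ 2)
    (hgrad : ∀ t : ℕ, ∀ x ∈ F, ‖grad t x‖ ≤ G)
    (proj : EuclideanSpace ℝ (Fin n) → EuclideanSpace ℝ (Fin n))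
    (hproj : ∀ z, proj z ∈ F ∧ ∀ x ∈ F, ‖proj z - z‖ ≤ ‖x - z‖)
    (x : ℕ → EuclideanSpace ℝ (Fin n)) (hx1 : x 1 ∈ F)
    (hupdate : ∀ t : ℕ, 1 ≤ t →
      x (t + 1) = proj (x t - (1 / (σ * t)) • grad t (x t)))
    (T : ℕ)
    (xstar : EuclideanSpace ℝ (Fin n)) (hxstar : xstar ∈ F) :
    ∑ t ∈ Finset.Icc 1 T, f t (x t) - ∑ t ∈ Finset.Icc 1 T, f t xstar
      ≤ G ^ 2 / (2 * σ) * (1 + Real.log T) := by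
  have hxF : ∀ t, 1 ≤ t → x t ∈ F :=
    Nat.le_induction hx1 fun t ht _ => hupdate t ht ▸ (hproj _).1
  set a : ℕ → ℝ := fun t => ‖x t - xstar‖ ^ 2
  have hstep : ∀ t ∈ Finset.Icc 1 T, f t (x t) - f t xstar ≤
      σ / 2 * ((t : ℝ) * (a t - a (t + 1)) - a t) + G ^ 2 / (2 * σ) * ((t : ℝ))⁻¹ := by
    intro t ht
    have ht1 := (Finset.mem_Icc.1 ht).1
    have htpos : (0 : ℝ) < t := by exact_mod_cast ht1
    have hnext : x (t + 1) = proj (x t - (σ * t)⁻¹ • grad t (x t)) := by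
      rw [hupdate t ht1, one_div]
    have h := sub_le_of_strongly_convex_projected_step hFconv (mul_pos hσ htpos)
      (hsc t xstar hxstar (x t) (hxF t ht1)) (hgrad t _ (hxF t ht1)) (hproj _).1 (hproj _).2
      hxstar
    rw [← hnext] at h
    convert h using 1
    field_simp
    ring
  have hσG : 0 ≤ G ^ 2 / (2 * σ) := by positivity
  have hlast : 0 ≤ (T : ℝ) * a (T + 1) := by positivity
  calc ∑ t ∈ Finset.Icc 1 T, f t (x t) - ∑ t ∈ Finset.Icc 1 T, f t xstar
      ≤ ∑ t ∈ Finset.Icc 1 T,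
          (σ / 2 * ((t : ℝ) * (a t - a (t + 1)) - a t) + G ^ 2 / (2 * σ) * ((t : ℝ))⁻¹) := by
        rw [← Finset.sum_sub_distrib]
        exact Finset.sum_le_sum hstep
    _ = σ / 2 * -(T * a (T + 1)) + G ^ 2 / (2 * σ) * ∑ t ∈ Finset.Icc 1 T, ((t : ℝ))⁻¹ := by
        rw [Finset.sum_add_distrib, ← Finset.mul_sum, ← Finset.mul_sum, sum_Icc_mul_sub_sub_eq]
    _ ≤ G ^ 2 / (2 * σ) * (1 + Real.log T) := by
        linarith [mul_le_mul_of_nonneg_left (sum_Icc_inv_le_one_add_log T) hσG,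
          mul_nonneg hσ.le hlast]

theorem ogd_strongly_convex_log_regret (n : ℕ) (σ G : ℝ) (hσ : 0 < σ) (hG : 0 < G)
    (F : Set (EuclideanSpace ℝ (Fin n))) (hFne : F.Nonempty) (hFc : IsClosed F)
    (hFconv : Convex ℝ F)
    (f : ℕ → EuclideanSpace ℝ (Fin n) → ℝ)
    (grad : ℕ → EuclideanSpace ℝ (Fin n) → EuclideanSpace ℝ (Fin n))
    (hsc : ∀ t : ℕ, ∀ x ∈ F, ∀ y ∈ F,
      f t x - f t y ≥ ⟪grad t y, x - y⟫ + σ / 2 * ‖x - y‖ ^ 2)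
    (hgrad : ∀ t : ℕ, ∀ x ∈ F, ‖grad t x‖ ≤ G)
    (proj : EuclideanSpace ℝ (Fin n) → EuclideanSpace ℝ (Fin n))
    (hproj : ∀ z, proj z ∈ F ∧ ∀ x ∈ F, ‖proj z - z‖ ≤ ‖x - z‖)
    (x : ℕ → EuclideanSpace ℝ (Fin n)) (hx1 : x 1 ∈ F)
    (hupdate : ∀ t : ℕ, 1 ≤ t →
      x (t + 1) = proj (x t - (1 / (σ * t)) • grad t (x t)))
    (T : ℕ) (hT : 1 ≤ T)
    (xstar : EuclideanSpace ℝ (Fin n)) (hxstar : xstar ∈ F)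
    (hmin : ∀ y ∈ F, ∑ t ∈ Finset.Icc 1 T, f t xstar ≤ ∑ t ∈ Finset.Icc 1 T, f t y) :
    ∑ t ∈ Finset.Icc 1 T, f t (x t) - ∑ t ∈ Finset.Icc 1 T, f t xstar
      ≤ G ^ 2 / (2 * σ) * (1 + Real.log T) :=
  ogd_strongly_convex_log_regret_general n σ G hσ F hFconv f grad hsc hgrad proj hproj x hx1 hupdate
    T xstar hxstar
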